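/- arXiv:1505.03258 — 4 statements merged into one kernel-verified Lean document; each statement's English description precedes it below -/
import Mathlib

section
/- Let n ≥ 1 and let A, B be positive real numbers. There exists a constant C > 0, depending only on A, B and n, with the following property: for every pair P, Q of n×n Hermitian positive definite complex matrices, if trace(Q⁻¹P) + A·log(det Q / det P) ≤ B, then trace(P⁻¹Q) ≤ C. (Here trace(Q⁻¹P), trace(P⁻¹Q), det P and det Q are positive real numbers.) -/
open scoped ComplexOrder


lemma scalar_min_aux {A x : ℝ} (hA : 0 < A) (hx : 0 < x) :
    A - A * Real.log A ≤ x - A * Real.log x := by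
  have h := Real.log_le_sub_one_of_pos (show 0 < x / A by positivity)
  rw [Real.log_div hx.ne' hA.ne'] at h
  have h2 := mul_le_mul_of_nonneg_left h hA.le
  rw [mul_sub, mul_sub, mul_div_cancel₀ _ hA.ne'] at h2
  linarith

lemma inv_le_exp_aux {A x : ℝ} (hA : 0 < A) (hx : 0 < x) :
    x⁻¹ ≤ Real.exp ((x - A * Real.log x) / A) := by
  have h1 : (x - A * Real.log x) / A = x / A - Real.log x := by field_simp
  rw [h1, Real.exp_sub, Real.exp_log hx, inv_eq_one_div]
  gcongr
  rw [Real.one_le_exp_iff]; positivity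

lemma scalar_key_aux (n : ℕ) {A B : ℝ} (hA : 0 < A) (μ : Fin n → ℝ) (hpos : ∀ i, 0 < μ i)
    (h : (∑ i, μ i) - A * (∑ i, Real.log (μ i)) ≤ B) :
    ∑ i, (μ i)⁻¹ ≤ n * Real.exp ((B - ((n:ℝ) - 1) * (A - A * Real.log A)) / A) := by
  set m := A - A * Real.log A with hm
  have key : ∀ i, (μ i)⁻¹ ≤ Real.exp ((B - ((n:ℝ) - 1) * m) / A) := by
    intro i
    have hsum : ∑ j, (μ j - A * Real.log (μ j)) ≤ B := by
      rw [Finset.sum_sub_distrib, ← Finset.mul_sum]; exact h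
    have herase : ((n:ℝ) - 1) * m ≤ ∑ j ∈ Finset.univ.erase i, (μ j - A * Real.log (μ j)) := by
      have hc : (Finset.univ.erase i).card = n - 1 := by
        rw [Finset.card_erase_of_mem (Finset.mem_univ i), Finset.card_univ, Fintype.card_fin]
      have h3 := Finset.card_nsmul_le_sum (Finset.univ.erase i)
        (fun j => μ j - A * Real.log (μ j)) m (fun j _ => scalar_min_aux hA (hpos j))
      rw [hc, nsmul_eq_mul, Nat.cast_sub i.pos, Nat.cast_one] at h3
      exact h3
    have hsplit : (∑ j ∈ Finset.univ.erase i, (μ j - A * Real.log (μ j)))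
        + (μ i - A * Real.log (μ i)) = ∑ j, (μ j - A * Real.log (μ j)) :=
      Finset.sum_erase_add _ _ (Finset.mem_univ i)
    have hi : μ i - A * Real.log (μ i) ≤ B - ((n:ℝ) - 1) * m := by linarith
    refine (inv_le_exp_aux hA (hpos i)).trans (Real.exp_le_exp.2 ?_)
    gcongr
  calc ∑ i, (μ i)⁻¹ ≤ ∑ _i : Fin n, Real.exp ((B - ((n:ℝ) - 1) * m) / A) :=
        Finset.sum_le_sum fun i _ => key i
    _ = n * Real.exp ((B - ((n:ℝ) - 1) * m) / A) := by
        rw [Finset.sum_const, Finset.card_univ, Fintype.card_fin, nsmul_eq_mul]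

open Matrix in
lemma posdef_conj_aux (n : ℕ) {A B : Matrix (Fin n) (Fin n) ℂ} (hA : A.PosDef)
    (hB : IsUnit B.det) : (Bᴴ * A * B).PosDef := by
  refine PosDef.of_dotProduct_mulVec_pos (isHermitian_conjTranspose_mul_mul B hA.1) fun x hx => ?_
  have hBx : B *ᵥ x ≠ 0 :=
    (Matrix.mulVec_injective_iff_isUnit.mpr ((Matrix.isUnit_iff_isUnit_det B).2 hB)
      |>.ne_iff' (by simp)).2 hx
  simpa only [star_mulVec, dotProduct_mulVec, vecMul_vecMul] using hA.dotProduct_mulVec_pos hBx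

open Matrix in
lemma spec_facts_aux (n : ℕ) {S : Matrix (Fin n) (Fin n) ℂ} (hS : S.PosDef) :
    (S.trace).re = ∑ i, hS.1.eigenvalues i ∧
    (S⁻¹.trace).re = ∑ i, (hS.1.eigenvalues i)⁻¹ ∧
    S.det = ((∏ i, hS.1.eigenvalues i : ℝ) : ℂ) := by
  set U : Matrix (Fin n) (Fin n) ℂ := (hS.1.eigenvectorUnitary : Matrix (Fin n) (Fin n) ℂ) with hU
  have hmem := (hS.1.eigenvectorUnitary).2
  rw [Matrix.mem_unitaryGroup_iff'] at hmem
  have hUU : star U * U = 1 := hmem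
  have hmem2 := (hS.1.eigenvectorUnitary).2
  rw [Matrix.mem_unitaryGroup_iff] at hmem2
  have hUsU : U * star U = 1 := hmem2
  set d : Fin n → ℂ := fun i => ((hS.1.eigenvalues i : ℝ) : ℂ) with hd
  have hne : ∀ i, d i ≠ 0 := fun i => by
    simp only [hd, ne_eq, Complex.ofReal_eq_zero]
    exact (hS.eigenvalues_pos i).ne'
  set D : Matrix (Fin n) (Fin n) ℂ := diagonal d with hD
  have hspec : S = U * D * star U := hS.1.spectral_theorem
  have htr : ∀ M : Matrix (Fin n) (Fin n) ℂ, (U * M * star U).trace = M.trace := by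
    intro M
    rw [Matrix.trace_mul_comm, ← mul_assoc, hUU, one_mul]
  set Dinv : Matrix (Fin n) (Fin n) ℂ := diagonal (fun i => (d i)⁻¹) with hDi
  have hDD : D * Dinv = 1 := by
    rw [hD, hDi, Matrix.diagonal_mul_diagonal, ← Matrix.diagonal_one]
    rw [show (fun i => d i * (d i)⁻¹) = fun _ => (1:ℂ) from funext fun i => mul_inv_cancel₀ (hne i)]
  have hinv : S⁻¹ = U * Dinv * star U := by
    apply Matrix.inv_eq_right_inv
    rw [hspec]
    calc U * D * star U * (U * Dinv * star U)
        = U * (D * ((star U * U) * (Dinv * star U))) := by simp only [mul_assoc]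
      _ = U * (D * Dinv) * star U := by simp only [hUU, one_mul, mul_assoc]
      _ = U * star U := by rw [hDD, mul_one]
      _ = 1 := hUsU
  refine ⟨?_, ?_, ?_⟩
  · rw [congrArg Matrix.trace hspec, htr, hD, Matrix.trace_diagonal]
    simp [hd]
  · rw [hinv, htr, hDi, Matrix.trace_diagonal]
    simp [hd]
  · rw [hS.1.det_eq_prod_eigenvalues]
    push_cast
    rfl

open Matrix in
lemma det_posdef_real (n : ℕ) {P : Matrix (Fin n) (Fin n) ℂ} (hP : P.PosDef) :
    P.det = ((P.det.re : ℝ) : ℂ) ∧ 0 < P.det.re := by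
  have h := hP.det_pos
  rw [Complex.lt_def] at h
  exact ⟨Complex.ext rfl (by simpa using h.2.symm), by simpa using h.1⟩

open scoped MatrixOrder in
lemma exists_sqrt_aux (n : ℕ) {M : Matrix (Fin n) (Fin n) ℂ} (hM : M.PosSemidef) :
    ∃ T : Matrix (Fin n) (Fin n) ℂ, T.PosSemidef ∧ T * T = M :=
  ⟨CFC.sqrt M, Matrix.nonneg_iff_posSemidef.mp (CFC.sqrt_nonneg M),
    CFC.sqrt_mul_sqrt_self M (Matrix.nonneg_iff_posSemidef.mpr hM)⟩

/-- Lemma 6.1(i), matrix form: for `n ≥ 1` and positive constants `A`, `B`, there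
is `C > 0`, depending only on `A`, `B`, `n`, such that for all Hermitian positive
definite `P Q`, if `trace(Q⁻¹P) + A·log(det Q / det P) ≤ B` then `trace(P⁻¹Q) ≤ C`. -/
theorem lemma_LA_i_matrix (n : ℕ) (hn : 1 ≤ n) (A B : ℝ) (hA : 0 < A) (hB : 0 < B) :
    ∃ C : ℝ, 0 < C ∧
      ∀ P Q : Matrix (Fin n) (Fin n) ℂ, P.PosDef → Q.PosDef →
        ((Q⁻¹ * P).trace).re + A * Real.log (Q.det.re / P.det.re) ≤ B →
        ((P⁻¹ * Q).trace).re ≤ C := by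
  refine ⟨n * Real.exp ((B - ((n:ℝ) - 1) * (A - A * Real.log A)) / A), ?_, ?_⟩
  · have : (0:ℝ) < n := by exact_mod_cast hn
    positivity
  intro P Q hP hQ hyp
  -- set up the conjugated matrix
  have hQi : (Q⁻¹).PosDef := hQ.inv
  obtain ⟨T, hTps, hTT⟩ := exists_sqrt_aux n hQi.posSemidef
  have hTherm : T.conjTranspose = T := hTps.1
  have hdetQ : IsUnit Q.det := hQ.isUnit.map (Matrix.detMonoidHom)
  have hdetQi : (Q⁻¹).det ≠ 0 := hQi.det_pos.ne'
  have hdetT : IsUnit T.det := by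
    have : T.det * T.det = (Q⁻¹).det := by rw [← Matrix.det_mul, hTT]
    refine isUnit_iff_ne_zero.2 fun h0 => hdetQi ?_
    rw [← this, h0, mul_zero]
  set S : Matrix (Fin n) (Fin n) ℂ := T * P * T with hSdef
  have hS : S.PosDef := by
    have := posdef_conj_aux n hP hdetT
    rwa [hTherm] at this
  obtain ⟨htrS, htrSinv, hdetS⟩ := spec_facts_aux n hS
  set μ : Fin n → ℝ := hS.1.eigenvalues with hμ
  have hpos : ∀ i, 0 < μ i := fun i => hS.eigenvalues_pos i
  -- trace S = trace (Q⁻¹ * P)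
  have h1 : S.trace = (Q⁻¹ * P).trace := by
    rw [hSdef, Matrix.trace_mul_cycle, hTT]
  -- trace S⁻¹ = trace (P⁻¹ * Q)
  have h2 : S⁻¹.trace = (P⁻¹ * Q).trace := by
    rw [hSdef, Matrix.mul_inv_rev, Matrix.mul_inv_rev, ← mul_assoc,
      Matrix.trace_mul_cycle, ← Matrix.mul_inv_rev, hTT,
      Matrix.nonsing_inv_nonsing_inv Q hdetQ, Matrix.trace_mul_comm]
  -- det S = P.det / Q.det
  have h3 : S.det = P.det * (Q.det)⁻¹ := by
    rw [hSdef, Matrix.det_mul, Matrix.det_mul, mul_comm T.det P.det, mul_assoc,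
      ← Matrix.det_mul, hTT, Matrix.det_nonsing_inv, Ring.inverse_eq_inv']
  obtain ⟨hPreal, hPpos⟩ := det_posdef_real n hP
  obtain ⟨hQreal, hQpos⟩ := det_posdef_real n hQ
  have hprod : ∏ i, μ i = P.det.re / Q.det.re := by
    have h5 := hdetS.symm.trans h3
    rw [hPreal, hQreal] at h5
    have h4 : ((∏ i, μ i : ℝ) : ℂ) = ((P.det.re / Q.det.re : ℝ) : ℂ) := by
      rw [h5]; push_cast; rw [div_eq_mul_inv]
    exact_mod_cast h4
  have hlog : Real.log (Q.det.re / P.det.re) = - ∑ i, Real.log (μ i) := by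
    have hqp : Q.det.re / P.det.re = (∏ i, μ i)⁻¹ := by
      rw [hprod, inv_div]
    rw [hqp, Real.log_inv, Real.log_prod (fun i _ => (hpos i).ne')]
  have hyp' : (∑ i, μ i) - A * (∑ i, Real.log (μ i)) ≤ B := by
    have := hyp
    rw [← h1, htrS, hlog] at this
    linarith
  have := scalar_key_aux n hA μ hpos hyp'
  rw [← h2, htrSinv]
  exact this
end

section
/- Let n ≥ 1 and let A, B be positive real numbers. There exists a constant C > 0, depending only on A, B and n, with the following property: for every pair P, Q of n×n Hermitian positive definite complex matrices, if A·P − Q is positive semidefinite and det P ≤ B·det Q, then C·Q − P is positive semidefinite. -/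
open scoped ComplexOrder

open Matrix Finset

open scoped MatrixOrder

set_option maxHeartbeats 1000000 in
/-- Lemma 6.1(ii), matrix form: for `n ≥ 1` and positive constants `A`, `B`, there
is `C > 0`, depending only on `A`, `B`, `n`, such that for all Hermitian positive
definite `P Q`, if `A·P − Q` is positive semidefinite and `det P ≤ B·det Q`, then
`C·Q − P` is positive semidefinite. -/
theorem lemma_LA_ii_matrix (n : ℕ) (hn : 1 ≤ n) (A B : ℝ) (hA : 0 < A) (hB : 0 < B) :
    ∃ C : ℝ, 0 < C ∧
      ∀ P Q : Matrix (Fin n) (Fin n) ℂ, P.PosDef → Q.PosDef →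
        ((A : ℂ) • P - Q).PosSemidef → P.det.re ≤ B * Q.det.re →
        ((C : ℂ) • Q - P).PosSemidef := by
  classical
  set C : ℝ := B * A ^ (n - 1) with hC
  refine ⟨C, by positivity, ?_⟩
  intro P Q hP hQ hAPQ hdet
  set S := CFC.sqrt Q with hSdef
  have hSps : S.PosSemidef := (CFC.sqrt_nonneg Q).posSemidef
  have hSH : Sᴴ = S := hSps.1
  have hSS : S * S = Q := CFC.sqrt_mul_sqrt_self Q hQ.posSemidef.nonneg
  have hQdetpos : (0:ℂ) < Q.det := hQ.det_pos
  have hPdetpos : (0:ℂ) < P.det := hP.det_pos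
  have hSdetU : IsUnit S.det := by
    have h1 : S.det * S.det = Q.det := by rw [← det_mul, hSS]
    have hne : S.det ≠ 0 := by
      intro h; rw [h, mul_zero] at h1; exact hQdetpos.ne' h1.symm
    exact hne.isUnit
  set T := S⁻¹ with hTdef
  have hTS : T * S = 1 := nonsing_inv_mul S hSdetU
  have hST : S * T = 1 := mul_nonsing_inv S hSdetU
  have hTH : Tᴴ = T := (Matrix.IsHermitian.inv hSps.1 : T.IsHermitian)
  clear_value S
  clear_value T
  set M := T * P * T with hMdef
  have hMH : M.IsHermitian := by
    have h := isHermitian_conjTranspose_mul_mul T hP.1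
    rwa [hTH] at h
  clear_value M
  set μ := hMH.eigenvalues with hμ
  -- A • M - 1 is positive semidefinite
  have hTQT : T * Q * T = 1 := by
    rw [← hSS, ← Matrix.mul_assoc, hTS, one_mul, hST]
  have hAM1 : ((A:ℂ) • M - 1).PosSemidef := by
    have h := hAPQ.conjTranspose_mul_mul_same T
    rw [hTH] at h
    have e : T * ((A:ℂ) • P - Q) * T = (A:ℂ) • M - 1 := by
      rw [Matrix.mul_sub, Matrix.sub_mul, Matrix.mul_smul, Matrix.smul_mul, hTQT, hMdef,
        Matrix.mul_assoc]
    rwa [e] at h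
  -- lower bound on eigenvalues of M
  have hlow : ∀ i, A⁻¹ ≤ μ i := by
    intro i
    set v : Fin n → ℂ := ⇑(hMH.eigenvectorBasis i) with hv
    have hvv : dotProduct (star v) v = 1 := by
      have h1 : ‖hMH.eigenvectorBasis i‖ = 1 := hMH.eigenvectorBasis.orthonormal.1 i
      have h2 : (inner ℂ (hMH.eigenvectorBasis i) (hMH.eigenvectorBasis i) : ℂ)
          = dotProduct (star v) v :=
          (EuclideanSpace.inner_eq_star_dotProduct _ _).trans (dotProduct_comm _ _)
      rw [← h2, inner_self_eq_norm_sq_to_K, h1]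
      simp
    have hMv : M *ᵥ v = (μ i : ℂ) • v := by
      have h := hMH.mulVec_eigenvectorBasis i
      rw [RCLike.real_smul_eq_coe_smul (K := ℂ)] at h
      exact h
    have hcomp : dotProduct (star v) (((A:ℂ) • M - 1) *ᵥ v)
        = ((A * μ i - 1 : ℝ) : ℂ) := by
      rw [sub_mulVec, smul_mulVec, one_mulVec, hMv, dotProduct_sub, dotProduct_smul,
        dotProduct_smul, hvv]
      push_cast
      simp [smul_eq_mul]
    have h0 := hAM1.dotProduct_mulVec_nonneg v
    rw [hcomp] at h0
    have h1 : (0:ℝ) ≤ A * μ i - 1 := by exact_mod_cast h0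
    rw [inv_le_iff_one_le_mul₀ hA]
    linarith
  have hμnonneg : ∀ i, 0 ≤ μ i := fun i => le_trans (inv_nonneg.mpr hA.le) (hlow i)
  -- product of eigenvalues
  have hprodM : ((∏ i, μ i : ℝ) : ℂ) * Q.det = P.det := by
    have h1 : M.det = ((∏ i, μ i : ℝ) : ℂ) := by
      rw [hMH.det_eq_prod_eigenvalues]; push_cast; rfl
    have hTdetS : T.det * S.det = 1 := by rw [← det_mul, hTS, det_one]
    have h2 : M.det * Q.det = P.det := by
      rw [hMdef, det_mul, det_mul, ← hSS, det_mul]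
      calc T.det * P.det * T.det * (S.det * S.det)
          = P.det * ((T.det * S.det) * (T.det * S.det)) := by ring
        _ = P.det := by rw [hTdetS]; ring
    rw [← h1]; exact h2
  have hQre : Q.det = ((Q.det.re : ℝ) : ℂ) := by
    have := hQdetpos
    rw [Complex.lt_def] at this
    exact Complex.ext rfl (by simpa using this.2.symm)
  have hPre : P.det = ((P.det.re : ℝ) : ℂ) := by
    have := hPdetpos
    rw [Complex.lt_def] at this
    exact Complex.ext rfl (by simpa using this.2.symm)
  have hQrepos : 0 < Q.det.re := by
    have := hQdetpos; rw [Complex.lt_def] at this; simpa using this.1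
  have hprodR : (∏ i, μ i) * Q.det.re = P.det.re := by
    have h := hprodM
    rw [hQre, hPre] at h
    exact_mod_cast h
  have hprodB : (∏ i, μ i) ≤ B := by
    have h : (∏ i, μ i) * Q.det.re ≤ B * Q.det.re := by rw [hprodR]; exact hdet
    exact le_of_mul_le_mul_right h hQrepos
  -- upper bound on eigenvalues
  have hup : ∀ i, μ i ≤ C := by
    intro i
    have herase : (A⁻¹) ^ (n - 1) ≤ ∏ j ∈ univ.erase i, μ j := by
      have hcard : (univ.erase i).card = n - 1 := by
        rw [card_erase_of_mem (mem_univ i), card_univ, Fintype.card_fin]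
      calc (A⁻¹) ^ (n - 1) = ∏ _j ∈ univ.erase i, A⁻¹ := by rw [prod_const, hcard]
        _ ≤ ∏ j ∈ univ.erase i, μ j :=
            prod_le_prod (fun _ _ => inv_nonneg.mpr hA.le) (fun j _ => hlow j)
    have hmul : μ i * ∏ j ∈ univ.erase i, μ j = ∏ j, μ j :=
      mul_prod_erase univ μ (mem_univ i)
    have h1 : μ i * (A⁻¹) ^ (n - 1) ≤ B := by
      calc μ i * (A⁻¹) ^ (n - 1) ≤ μ i * ∏ j ∈ univ.erase i, μ j :=
            mul_le_mul_of_nonneg_left herase (hμnonneg i)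
        _ = ∏ j, μ j := hmul
        _ ≤ B := hprodB
    have hApow : (0:ℝ) < A ^ (n - 1) := pow_pos hA _
    rw [inv_pow, ← div_eq_mul_inv, div_le_iff₀ hApow] at h1
    rw [hC]
    linarith [h1]
  -- C • 1 - M is positive semidefinite
  have hCM : ((C:ℂ) • (1 : Matrix (Fin n) (Fin n) ℂ) - M).PosSemidef := by
    set U : Matrix (Fin n) (Fin n) ℂ := (hMH.eigenvectorUnitary : Matrix (Fin n) (Fin n) ℂ)
      with hU
    have hUU : U * star U = 1 := Matrix.mem_unitaryGroup_iff.mp hMH.eigenvectorUnitary.2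
    have hdiag : (diagonal (fun i => ((C - μ i : ℝ) : ℂ))).PosSemidef :=
      posSemidef_diagonal_iff.mpr (fun i => by
        have := sub_nonneg.mpr (hup i)
        exact_mod_cast this)
    have h := hdiag.mul_mul_conjTranspose_same U
    have heq : U * diagonal (fun i => ((C - μ i : ℝ) : ℂ)) * Uᴴ
        = (C:ℂ) • (1 : Matrix (Fin n) (Fin n) ℂ) - M := by
      have hd : diagonal (fun i => ((C - μ i : ℝ) : ℂ))
          = (C:ℂ) • (1 : Matrix (Fin n) (Fin n) ℂ)
            - diagonal ((↑) ∘ μ : Fin n → ℂ) := by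
        rw [← Matrix.diagonal_one, ← diagonal_smul, diagonal_sub]
        congr 1
        funext j
        push_cast
        simp [smul_eq_mul]
      rw [hd, Matrix.mul_sub, Matrix.sub_mul]
      congr 1
      · rw [← Matrix.star_eq_conjTranspose, mul_smul_comm, Matrix.smul_mul, mul_one, hUU]
      · rw [← Matrix.star_eq_conjTranspose]
        conv_rhs => rw [hMH.spectral_theorem]
        rw [hU, hμ]
        rfl
    rwa [heq] at h
  -- transfer back
  have hfin := hCM.conjTranspose_mul_mul_same S
  rw [hSH] at hfin
  have e : S * ((C:ℂ) • (1 : Matrix (Fin n) (Fin n) ℂ) - M) * S = (C:ℂ) • Q - P := by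
    rw [Matrix.mul_sub, Matrix.sub_mul]
    congr 1
    · rw [Matrix.mul_smul, Matrix.smul_mul, mul_one, hSS]
    · rw [hMdef]
      calc S * (T * P * T) * S = (S * T) * P * (T * S) := by
            simp only [Matrix.mul_assoc]
        _ = P := by rw [hST, hTS, one_mul, mul_one]
  rwa [e] at hfin
end

section
/- Let n ≥ 1 and let A, B be n×n Hermitian positive definite complex matrices. Then trace(B⁻¹A) · det B ≤ (1/(n−1)!) · (trace(A⁻¹B))^{n−1} · det A, where trace(B⁻¹A), trace(A⁻¹B), det A and det B are positive real numbers. -/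
open Finset in
lemma factorial_esymm_le {ι : Type*} [DecidableEq ι] (s : Finset ι) (f : ι → ℝ)
    (hf : ∀ i ∈ s, 0 ≤ f i) (k : ℕ) :
    (k.factorial : ℝ) * ∑ T ∈ s.powersetCard k, ∏ j ∈ T, f j ≤ (∑ i ∈ s, f i) ^ k := by
  have hS : 0 ≤ ∑ i ∈ s, f i := Finset.sum_nonneg hf
  induction k with
  | zero => simp
  | succ k ih =>
      have hE : 0 ≤ ∑ T ∈ s.powersetCard k, ∏ j ∈ T, f j := by
        refine Finset.sum_nonneg fun T hT => Finset.prod_nonneg fun j hj => hf j ?_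
        exact (Finset.mem_powersetCard.mp hT).1 hj
      have step : ((k+1 : ℕ) : ℝ) * ∑ U ∈ s.powersetCard (k+1), ∏ j ∈ U, f j
          ≤ (∑ T ∈ s.powersetCard k, ∏ j ∈ T, f j) * ∑ i ∈ s, f i := by
        have e1 : ((k+1:ℕ):ℝ) * ∑ U ∈ s.powersetCard (k+1), ∏ j ∈ U, f j
            = ∑ U ∈ s.powersetCard (k+1), ∑ i ∈ U, f i * ∏ j ∈ U.erase i, f j := by
          rw [Finset.mul_sum]
          refine Finset.sum_congr rfl fun U hU => ?_
          have hcard : U.card = k+1 := (Finset.mem_powersetCard.mp hU).2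
          rw [Finset.sum_congr rfl (fun i hi => Finset.mul_prod_erase U f hi),
            Finset.sum_const, hcard, nsmul_eq_mul]
        have e2 : ∑ U ∈ s.powersetCard (k+1), ∑ i ∈ U, f i * ∏ j ∈ U.erase i, f j
            = ∑ T ∈ s.powersetCard k, ∑ i ∈ s \ T, f i * ∏ j ∈ T, f j := by
          rw [Finset.sum_sigma', Finset.sum_sigma']
          refine Finset.sum_nbij' (fun p => ⟨p.1.erase p.2, p.2⟩)
            (fun p => ⟨insert p.2 p.1, p.2⟩) ?_ ?_ ?_ ?_ ?_
          · rintro ⟨U, i⟩ hp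
            rw [Finset.mem_sigma] at hp ⊢
            obtain ⟨hU, hi⟩ := hp
            obtain ⟨hUs, hUc⟩ := Finset.mem_powersetCard.mp hU
            refine ⟨Finset.mem_powersetCard.mpr ⟨(Finset.erase_subset _ _).trans hUs, ?_⟩, ?_⟩
            · rw [Finset.card_erase_of_mem hi, hUc]; rfl
            · exact Finset.mem_sdiff.mpr ⟨hUs hi, Finset.notMem_erase _ _⟩
          · rintro ⟨T, i⟩ hp
            rw [Finset.mem_sigma] at hp ⊢
            obtain ⟨hT, hi⟩ := hp
            obtain ⟨hTs, hTc⟩ := Finset.mem_powersetCard.mp hT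
            obtain ⟨his, hiT⟩ := Finset.mem_sdiff.mp hi
            refine ⟨Finset.mem_powersetCard.mpr ⟨?_, ?_⟩, Finset.mem_insert_self _ _⟩
            · exact Finset.insert_subset his hTs
            · rw [Finset.card_insert_of_notMem hiT, hTc]
          · rintro ⟨U, i⟩ hp
            rw [Finset.mem_sigma] at hp
            simp only [Finset.insert_erase hp.2]
          · rintro ⟨T, i⟩ hp
            rw [Finset.mem_sigma] at hp
            have hiT := (Finset.mem_sdiff.mp hp.2).2
            simp only [Finset.erase_insert hiT]
          · rintro ⟨U, i⟩ hp
            rfl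
        have e3 : ∑ T ∈ s.powersetCard k, ∑ i ∈ s \ T, f i * ∏ j ∈ T, f j
            ≤ ∑ T ∈ s.powersetCard k, ∑ i ∈ s, f i * ∏ j ∈ T, f j := by
          refine Finset.sum_le_sum fun T hT => ?_
          refine Finset.sum_le_sum_of_subset_of_nonneg (Finset.sdiff_subset) fun i hi _ => ?_
          exact mul_nonneg (hf i hi)
            (Finset.prod_nonneg fun j hj => hf j ((Finset.mem_powersetCard.mp hT).1 hj))
        have e4 : ∑ T ∈ s.powersetCard k, ∑ i ∈ s, f i * ∏ j ∈ T, f j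
            = (∑ T ∈ s.powersetCard k, ∏ j ∈ T, f j) * ∑ i ∈ s, f i := by
          rw [Finset.sum_mul]
          refine Finset.sum_congr rfl fun T hT => ?_
          rw [Finset.mul_sum]
          refine Finset.sum_congr rfl fun i hi => mul_comm _ _
        calc ((k+1:ℕ):ℝ) * ∑ U ∈ s.powersetCard (k+1), ∏ j ∈ U, f j
            = ∑ U ∈ s.powersetCard (k+1), ∑ i ∈ U, f i * ∏ j ∈ U.erase i, f j := e1
          _ = ∑ T ∈ s.powersetCard k, ∑ i ∈ s \ T, f i * ∏ j ∈ T, f j := e2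
          _ ≤ ∑ T ∈ s.powersetCard k, ∑ i ∈ s, f i * ∏ j ∈ T, f j := e3
          _ = (∑ T ∈ s.powersetCard k, ∏ j ∈ T, f j) * ∑ i ∈ s, f i := e4
      have hfac : (0:ℝ) ≤ (k.factorial : ℝ) := by positivity
      calc ((k+1).factorial : ℝ) * ∑ U ∈ s.powersetCard (k+1), ∏ j ∈ U, f j
          = (k.factorial : ℝ) * (((k+1:ℕ):ℝ) * ∑ U ∈ s.powersetCard (k+1), ∏ j ∈ U, f j) := by
            rw [Nat.factorial_succ]; push_cast; ring
        _ ≤ (k.factorial : ℝ) * ((∑ T ∈ s.powersetCard k, ∏ j ∈ T, f j) * ∑ i ∈ s, f i) :=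
            mul_le_mul_of_nonneg_left step hfac
        _ = ((k.factorial : ℝ) * ∑ T ∈ s.powersetCard k, ∏ j ∈ T, f j) * ∑ i ∈ s, f i := by ring
        _ ≤ (∑ i ∈ s, f i) ^ k * ∑ i ∈ s, f i := mul_le_mul_of_nonneg_right ih hS
        _ = (∑ i ∈ s, f i) ^ (k+1) := (pow_succ _ _).symm

lemma real_trace_det_ineq (n : ℕ) (hn : 1 ≤ n) (lam : Fin n → ℝ) (hl : ∀ i, 0 < lam i) :
    ∑ i, lam i ≤ (1 / ((n-1).factorial : ℝ)) * (∑ i, (lam i)⁻¹) ^ (n-1) * ∏ i, lam i := by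
  have hprodpos : (0:ℝ) < ∏ i, lam i := Finset.prod_pos fun i _ => hl i
  have h1 : ∑ i, lam i
      = (∏ i, lam i) * ∑ i : Fin n, ∏ j ∈ Finset.univ.erase i, (lam j)⁻¹ := by
    rw [Finset.mul_sum]
    refine Finset.sum_congr rfl fun i _ => ?_
    rw [Finset.prod_inv_distrib,
      ← Finset.mul_prod_erase Finset.univ lam (Finset.mem_univ i), mul_assoc,
      mul_inv_cancel₀, mul_one]
    exact (Finset.prod_pos fun j hj => hl j).ne'
  have h2 : ∑ i : Fin n, ∏ j ∈ Finset.univ.erase i, (lam j)⁻¹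
      = ∑ T ∈ Finset.univ.powersetCard (n-1), ∏ j ∈ T, (lam j)⁻¹ := by
    refine Finset.sum_nbij (fun i => Finset.univ.erase i) ?_ ?_ ?_ ?_
    · intro i _
      refine Finset.mem_powersetCard.mpr ⟨Finset.subset_univ _, ?_⟩
      rw [Finset.card_erase_of_mem (Finset.mem_univ i), Finset.card_univ, Fintype.card_fin]
    · intro a _ b _ hab
      by_contra hne
      have : a ∈ Finset.univ.erase b := Finset.mem_erase.mpr ⟨hne, Finset.mem_univ a⟩
      simp only at hab
      rw [← hab] at this
      exact (Finset.notMem_erase a Finset.univ) this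
    · intro T hT
      rw [Finset.mem_coe, Finset.mem_powersetCard] at hT
      have hcard : (Finset.univ \ T).card = 1 := by
        rw [Finset.card_sdiff_of_subset hT.1, Finset.card_univ, Fintype.card_fin, hT.2]
        omega
      obtain ⟨a, ha⟩ := Finset.card_eq_one.mp hcard
      refine ⟨a, Finset.mem_coe.mpr (Finset.mem_univ a), ?_⟩
      have : T = Finset.univ.erase a := by
        ext x
        simp only [Finset.mem_erase, Finset.mem_univ, and_true]
        constructor
        · intro hx hxa
          subst hxa
          have : x ∈ Finset.univ \ T := ha ▸ Finset.mem_singleton_self x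
          exact (Finset.mem_sdiff.mp this).2 hx
        · intro hx
          by_contra hxT
          have : x ∈ Finset.univ \ T := Finset.mem_sdiff.mpr ⟨Finset.mem_univ x, hxT⟩
          rw [ha, Finset.mem_singleton] at this
          exact hx this
      exact this.symm
    · intro i _
      rfl
  have key := factorial_esymm_le Finset.univ (fun i => (lam i)⁻¹)
    (fun i _ => (inv_pos.mpr (hl i)).le) (n-1)
  have hfacpos : (0:ℝ) < ((n-1).factorial : ℝ) := by positivity
  have hE : ∑ T ∈ Finset.univ.powersetCard (n-1), ∏ j ∈ T, (lam j)⁻¹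
      ≤ (1 / ((n-1).factorial : ℝ)) * (∑ i, (lam i)⁻¹) ^ (n-1) := by
    rw [one_div, inv_mul_eq_div, le_div_iff₀ hfacpos, mul_comm]
    exact key
  calc ∑ i, lam i
      = (∏ i, lam i) * ∑ i : Fin n, ∏ j ∈ Finset.univ.erase i, (lam j)⁻¹ := h1
    _ = (∏ i, lam i) * ∑ T ∈ Finset.univ.powersetCard (n-1), ∏ j ∈ T, (lam j)⁻¹ := by rw [h2]
    _ ≤ (∏ i, lam i) * ((1 / ((n-1).factorial : ℝ)) * (∑ i, (lam i)⁻¹) ^ (n-1)) :=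
        mul_le_mul_of_nonneg_left hE hprodpos.le
    _ = (1 / ((n-1).factorial : ℝ)) * (∑ i, (lam i)⁻¹) ^ (n-1) * ∏ i, lam i := by ring

open scoped ComplexOrder
open scoped Matrix

/-- Matrix form of the pointwise inequality
`(tr_{ω̃}ω)·ω̃ⁿ ≤ (1/(n−1)!)·(tr_{ω}ω̃)^{n−1}·ωⁿ`:
for Hermitian positive definite `A B` (`n ≥ 1`),
`trace(B⁻¹A)·det B ≤ (1/(n−1)!)·(trace(A⁻¹B))^{n−1}·det A`. -/
theorem trace_det_ineq_matrix (n : ℕ) (hn : 1 ≤ n)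
    (A B : Matrix (Fin n) (Fin n) ℂ) (hA : A.PosDef) (hB : B.PosDef) :
    ((B⁻¹ * A).trace).re * B.det.re ≤
      (1 / ((n - 1).factorial : ℝ)) * (((A⁻¹ * B).trace).re) ^ (n - 1) * A.det.re := by
  classical
  -- square root of B
  set S : Matrix (Fin n) (Fin n) ℂ := (open scoped MatrixOrder in CFC.sqrt B) with hSdef
  have hSps : S.PosSemidef := (open scoped MatrixOrder in Matrix.nonneg_iff_posSemidef.mp (CFC.sqrt_nonneg B))
  have hSH : S.IsHermitian := hSps.1
  have hSS : S * S = B := (open scoped MatrixOrder in CFC.sqrt_mul_sqrt_self B hB.posSemidef.nonneg)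
  have hdetB : (0:ℂ) < B.det := hB.det_pos
  have hdetA : (0:ℂ) < A.det := hA.det_pos
  have hdetSS : S.det * S.det = B.det := by rw [← Matrix.det_mul, hSS]
  have hdetS : S.det ≠ 0 := by
    intro h
    rw [h, mul_zero] at hdetSS
    exact hdetB.ne' hdetSS.symm
  have hSu : IsUnit S.det := isUnit_iff_ne_zero.mpr hdetS
  have hAu : IsUnit A.det := isUnit_iff_ne_zero.mpr hdetA.ne'
  have hSinvH : S⁻¹.IsHermitian := by
    rw [Matrix.IsHermitian, Matrix.conjTranspose_nonsing_inv, hSH.eq]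
  -- M = S⁻¹ A S⁻¹ is positive definite
  set M : Matrix (Fin n) (Fin n) ℂ := S⁻¹ * A * S⁻¹ with hMdef
  have hM : M.PosDef := by
    refine Matrix.PosDef.of_dotProduct_mulVec_pos ?_ ?_
    · rw [hMdef, Matrix.IsHermitian, Matrix.conjTranspose_mul, Matrix.conjTranspose_mul,
        hSinvH.eq, hA.isHermitian.eq, Matrix.mul_assoc]
    · intro x hx
      have hy : S⁻¹ *ᵥ x ≠ 0 := by
        intro h
        apply hx
        have : S *ᵥ (S⁻¹ *ᵥ x) = x := by
          rw [Matrix.mulVec_mulVec, Matrix.mul_nonsing_inv _ hSu, Matrix.one_mulVec]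
        rw [h, Matrix.mulVec_zero] at this
        exact this.symm
      have key := hA.dotProduct_mulVec_pos hy
      have : star x ⬝ᵥ M *ᵥ x = star (S⁻¹ *ᵥ x) ⬝ᵥ A *ᵥ (S⁻¹ *ᵥ x) := by
        rw [Matrix.star_mulVec, hSinvH.eq, hMdef, ← Matrix.mulVec_mulVec, ← Matrix.mulVec_mulVec,
          Matrix.dotProduct_mulVec]
      rw [this]
      exact key
  have hMH : M.IsHermitian := hM.1
  set lam : Fin n → ℝ := hMH.eigenvalues with hlam
  have hlpos : ∀ i, 0 < lam i := hM.eigenvalues_pos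
  set U : Matrix (Fin n) (Fin n) ℂ := (hMH.eigenvectorUnitary : Matrix (Fin n) (Fin n) ℂ) with hU
  have hUstar : star U * U = 1 := (Matrix.mem_unitaryGroup_iff').mp (hMH.eigenvectorUnitary).2
  have hUU : U * star U = 1 := (Matrix.mem_unitaryGroup_iff).mp (hMH.eigenvectorUnitary).2
  have hspec : M = U * Matrix.diagonal (RCLike.ofReal ∘ lam) * star U := hMH.spectral_theorem
  -- trace of M
  have htrM : M.trace = ∑ i, (lam i : ℂ) := by
    rw [hspec, Matrix.trace_mul_cycle, hUstar, Matrix.one_mul, Matrix.trace_diagonal]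
    rfl
  -- inverse of M
  have hMinv : M⁻¹ = U * Matrix.diagonal (RCLike.ofReal ∘ fun i => (lam i)⁻¹) * star U := by
    apply Matrix.inv_eq_right_inv
    rw [hspec]
    calc U * Matrix.diagonal (RCLike.ofReal ∘ lam) * star U *
          (U * Matrix.diagonal (RCLike.ofReal ∘ fun i => (lam i)⁻¹) * star U)
        = U * Matrix.diagonal (RCLike.ofReal ∘ lam) * (star U * U) *
          Matrix.diagonal (RCLike.ofReal ∘ fun i => (lam i)⁻¹) * star U := by
          simp only [Matrix.mul_assoc]
      _ = U * (Matrix.diagonal (RCLike.ofReal ∘ lam) *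
          Matrix.diagonal (RCLike.ofReal ∘ fun i => (lam i)⁻¹)) * star U := by
          rw [hUstar, Matrix.mul_one]
          simp only [Matrix.mul_assoc]
      _ = U * star U := by
          have hD : Matrix.diagonal (RCLike.ofReal ∘ lam) *
              Matrix.diagonal (RCLike.ofReal ∘ fun i => (lam i)⁻¹) =
              (1 : Matrix (Fin n) (Fin n) ℂ) := by
            rw [Matrix.diagonal_mul_diagonal]
            have hfun : (fun i => (RCLike.ofReal ∘ lam) i *
                (RCLike.ofReal ∘ fun i => (lam i)⁻¹) i)
                = fun _ : Fin n => (1:ℂ) := by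
              funext i
              simp only [Function.comp_apply]
              rw [← RCLike.ofReal_mul, mul_inv_cancel₀ (hlpos i).ne', RCLike.ofReal_one]
            rw [hfun]
            exact Matrix.diagonal_one
          rw [hD, Matrix.mul_one]
      _ = 1 := hUU
  have htrMinv : M⁻¹.trace = ∑ i, ((lam i)⁻¹ : ℂ) := by
    rw [hMinv, Matrix.trace_mul_cycle, hUstar, Matrix.one_mul, Matrix.trace_diagonal]
    refine Finset.sum_congr rfl fun i _ => ?_
    exact RCLike.ofReal_inv (lam i)
  -- trace identifications
  have hBinv : B⁻¹ = S⁻¹ * S⁻¹ := by rw [← hSS, Matrix.mul_inv_rev]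
  have htr1 : (B⁻¹ * A).trace = M.trace := by
    rw [hMdef, hBinv, Matrix.mul_assoc, Matrix.trace_mul_comm]
  have hMinv' : M⁻¹ = S * A⁻¹ * S := by
    apply Matrix.inv_eq_right_inv
    rw [hMdef]
    calc S⁻¹ * A * S⁻¹ * (S * A⁻¹ * S)
        = S⁻¹ * (A * ((S⁻¹ * S) * A⁻¹)) * S := by simp only [Matrix.mul_assoc]
      _ = S⁻¹ * (A * A⁻¹) * S := by rw [Matrix.nonsing_inv_mul _ hSu, Matrix.one_mul]
      _ = S⁻¹ * S := by rw [Matrix.mul_nonsing_inv _ hAu, Matrix.mul_one]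
      _ = 1 := Matrix.nonsing_inv_mul _ hSu
  have htr2 : (A⁻¹ * B).trace = M⁻¹.trace := by
    rw [hMinv', ← hSS, ← Matrix.mul_assoc, Matrix.trace_mul_cycle]
  -- determinant identification
  have hdet : A.det = B.det * (∏ i, (lam i : ℂ)) := by
    have h1 : M.det = S⁻¹.det * A.det * S⁻¹.det := by rw [hMdef, Matrix.det_mul, Matrix.det_mul]
    have h2 : M.det = ∏ i, (lam i : ℂ) := hMH.det_eq_prod_eigenvalues
    have hSinvdet : S.det * S⁻¹.det = 1 := by
      rw [← Matrix.det_mul, Matrix.mul_nonsing_inv _ hSu, Matrix.det_one]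
    calc A.det = (S.det * S⁻¹.det) * A.det * (S.det * S⁻¹.det) := by rw [hSinvdet]; ring
      _ = (S.det * S.det) * (S⁻¹.det * A.det * S⁻¹.det) := by ring
      _ = B.det * M.det := by rw [hdetSS, h1]
      _ = B.det * ∏ i, (lam i : ℂ) := by rw [h2]
  -- real parts
  have hre1 : ((B⁻¹ * A).trace).re = ∑ i, lam i := by
    rw [htr1, htrM]
    rw [Complex.re_sum]
    simp
  have hre2 : ((A⁻¹ * B).trace).re = ∑ i, (lam i)⁻¹ := by
    rw [htr2, htrMinv, Complex.re_sum]
    simp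
  have hdetBre : B.det.re > 0 := by
    rw [Complex.lt_def] at hdetB
    simpa using hdetB.1
  have hdetBim : B.det.im = 0 := by
    rw [Complex.lt_def] at hdetB
    simpa using hdetB.2.symm
  have hreA : A.det.re = B.det.re * ∏ i, lam i := by
    rw [hdet]
    have : (∏ i, (lam i : ℂ)) = ((∏ i, lam i : ℝ) : ℂ) := by push_cast; rfl
    rw [this, Complex.mul_re, Complex.ofReal_re, Complex.ofReal_im, hdetBim]
    ring
  rw [hre1, hre2, hreA]
  have main := real_trace_det_ineq n hn lam hlpos
  calc (∑ i, lam i) * B.det.re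
      = B.det.re * ∑ i, lam i := by ring
    _ ≤ B.det.re * ((1 / ((n-1).factorial : ℝ)) * (∑ i, (lam i)⁻¹) ^ (n-1) * ∏ i, lam i) :=
        mul_le_mul_of_nonneg_left main hdetBre.le
    _ = (1 / ((n-1).factorial : ℝ)) * (∑ i, (lam i)⁻¹) ^ (n-1) * (B.det.re * ∏ i, lam i) := by
        ring
end

section
/- Let M be a nonempty compact topological space, let T > 0, and let h : M × [0,T] → ℝ be continuous. Assume that for every x ∈ M the function t ↦ h(x,t) has at every t₀ ∈ (0,T] a (left) derivative ∂ₜh(x,t₀), and assume that for every t₀ ∈ (0,T] and every x₀ ∈ M such that h(x₀,t₀) = max_{x∈M} h(x,t₀), one has ∂ₜh(x₀,t₀) ≤ 0. Then sup_{(x,t)∈M×[0,T]} h(x,t) = max_{x∈M} h(x,0). -/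
/-!
Perturb `h` to `h x t - c * t` with `c > 0`. Its maximum over the compact space `M × [0, T]`
cannot sit at a time `t₀ > 0`: the maximizer `x₀` is a spatial maximum at `t₀`, so
`∂ₜh(x₀, t₀) ≤ 0`, while `t ↦ h x₀ t - c * t` is maximal on `[0, t₀]` at its right endpoint, so
`∂ₜh(x₀, t₀) - c ≥ 0`. Hence `h x t ≤ max h(·, 0) + c * T` for every `c > 0`; let `c → 0`.
-/

open Set

theorem IsMaxOn.hasDerivWithinAt_Icc_right_nonneg {f : ℝ → ℝ} {f' a b : ℝ} (hab : a < b)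
    (hmax : IsMaxOn f (Icc a b) b) (hf : HasDerivWithinAt f f' (Icc a b) b) : 0 ≤ f' := by
  have hcone : a - b ∈ posTangentConeAt (Icc a b) b := by
    apply mem_posTangentConeAt_of_segment_subset
    rw [add_sub_cancel, segment_symm, segment_eq_Icc hab.le]
  have hslope := hmax.localize.hasFDerivWithinAt_nonpos hf.hasFDerivWithinAt hcone
  simp only [ContinuousLinearMap.toSpanSingleton_apply, smul_eq_mul] at hslope
  nlinarith

section MaximumPrinciple

variable {M : Type*} {T : ℝ} {h d : M → ℝ → ℝ}

theorem ContinuousOn.continuous_restrict_prod_Icc [TopologicalSpace M]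
    (hcont : ContinuousOn (fun p : M × ℝ => h p.1 p.2) (univ ×ˢ Icc 0 T)) :
    Continuous fun p : M × Icc 0 T => h p.1 p.2 :=
  hcont.comp_continuous (continuous_fst.prodMk (continuous_subtype_val.comp continuous_snd))
    fun p => ⟨mem_univ _, p.2.2⟩

theorem perturbed_maximizer_time_eq_zero
    (hderiv : ∀ x : M, ∀ t₀ ∈ Ioc (0 : ℝ) T, HasDerivWithinAt (h x) (d x t₀) (Icc 0 t₀) t₀)
    (hmax : ∀ t₀ ∈ Ioc (0 : ℝ) T, ∀ x₀ : M, (∀ x : M, h x t₀ ≤ h x₀ t₀) → d x₀ t₀ ≤ 0)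
    {c : ℝ} (hc : 0 < c) {p₀ : M × Icc 0 T}
    (hp₀ : ∀ p : M × Icc 0 T, h p.1 p.2 - c * p.2 ≤ h p₀.1 p₀.2 - c * p₀.2) :
    (p₀.2 : ℝ) = 0 := by
  obtain ⟨x₀, t₀, ht₀, ht₀T⟩ := p₀
  by_contra hne
  have hpos : 0 < t₀ := lt_of_le_of_ne ht₀ (Ne.symm hne)
  have hspatial : ∀ x : M, h x t₀ ≤ h x₀ t₀ := fun x => by
    simpa using hp₀ (x, ⟨t₀, ht₀, ht₀T⟩)
  have hd_nonpos : d x₀ t₀ ≤ 0 := hmax t₀ ⟨hpos, ht₀T⟩ x₀ hspatial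
  have hmax_time : IsMaxOn (fun s => h x₀ s - c * s) (Icc 0 t₀) t₀ := fun s hs =>
    hp₀ (x₀, ⟨s, hs.1, hs.2.trans ht₀T⟩)
  have hderiv_time : HasDerivWithinAt (fun s => h x₀ s - c * s) (d x₀ t₀ - c * 1) (Icc 0 t₀) t₀ :=
    (hderiv x₀ t₀ ⟨hpos, ht₀T⟩).sub ((hasDerivAt_id t₀).const_mul c).hasDerivWithinAt
  have := hmax_time.hasDerivWithinAt_Icc_right_nonneg hpos hderiv_time
  linarith

theorem sub_mul_le_iSup_initial [TopologicalSpace M] [CompactSpace M]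
    (hcont : ContinuousOn (fun p : M × ℝ => h p.1 p.2) (univ ×ˢ Icc 0 T))
    (hderiv : ∀ x : M, ∀ t₀ ∈ Ioc (0 : ℝ) T, HasDerivWithinAt (h x) (d x t₀) (Icc 0 t₀) t₀)
    (hmax : ∀ t₀ ∈ Ioc (0 : ℝ) T, ∀ x₀ : M, (∀ x : M, h x t₀ ≤ h x₀ t₀) → d x₀ t₀ ≤ 0)
    {c : ℝ} (hc : 0 < c) (p : M × Icc 0 T) :
    h p.1 p.2 - c * p.2 ≤ ⨆ x, h x 0 := by
  have hT : 0 ≤ T := p.2.2.1.trans p.2.2.2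
  have hcont_initial : Continuous fun x : M => h x 0 :=
    hcont.comp_continuous (continuous_id.prodMk continuous_const)
      fun _ => ⟨mem_univ _, left_mem_Icc.2 hT⟩
  have hperturbed : Continuous fun q : M × Icc 0 T => h q.1 q.2 - c * q.2 :=
    hcont.continuous_restrict_prod_Icc.sub
      (continuous_const.mul (continuous_subtype_val.comp continuous_snd))
  obtain ⟨p₀, -, hp₀⟩ := isCompact_univ.exists_isMaxOn ⟨p, mem_univ p⟩ hperturbed.continuousOn
  have ht₀ : (p₀.2 : ℝ) = 0 :=
    perturbed_maximizer_time_eq_zero hderiv hmax hc fun q => hp₀ (mem_univ q)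
  calc h p.1 p.2 - c * p.2 ≤ h p₀.1 p₀.2 - c * p₀.2 := hp₀ (mem_univ p)
    _ = h p₀.1 0 := by rw [ht₀, mul_zero, sub_zero]
    _ ≤ ⨆ x, h x 0 := le_ciSup (isCompact_range hcont_initial).bddAbove p₀.1

end MaximumPrinciple

/-- Abstract core of the maximum principle for basic maps (Proposition 5):
let `M` be a nonempty compact space, `T > 0`, `h : M × [0,T] → ℝ` continuous,
such that for every `x` the map `t ↦ h x t` has left derivative `d x t₀` at every
`t₀ ∈ (0,T]`, and assume `d x₀ t₀ ≤ 0` whenever `x₀` realizes the spatial maximum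
of `h (·) t₀` for `t₀ ∈ (0,T]`.  Then the supremum of `h` over `M × [0,T]` equals
the maximum of `h (·) 0` over `M`. -/
theorem maximum_principle_core {M : Type*} [TopologicalSpace M] [CompactSpace M]
    [Nonempty M] (T : ℝ) (hT : 0 < T) (h : M → ℝ → ℝ) (d : M → ℝ → ℝ)
    (hcont : ContinuousOn (fun p : M × ℝ => h p.1 p.2) (Set.univ ×ˢ Set.Icc 0 T))
    (hderiv : ∀ x : M, ∀ t₀ ∈ Set.Ioc (0 : ℝ) T,
      HasDerivWithinAt (h x) (d x t₀) (Set.Icc 0 t₀) t₀)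
    (hmax : ∀ t₀ ∈ Set.Ioc (0 : ℝ) T, ∀ x₀ : M,
      (∀ x : M, h x t₀ ≤ h x₀ t₀) → d x₀ t₀ ≤ 0) :
    (⨆ p : M × Set.Icc (0 : ℝ) T, h p.1 p.2) = ⨆ x : M, h x 0 := by
  have : Nonempty (Icc 0 T) := ⟨⟨0, le_rfl, hT.le⟩⟩
  refine le_antisymm (ciSup_le fun p => le_of_forall_pos_le_add fun ε hε => ?_) ?_
  · have hbound := sub_mul_le_iSup_initial hcont hderiv hmax (div_pos hε hT) p
    have hsmall : ε / T * p.2 ≤ ε :=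
      calc ε / T * p.2 ≤ ε / T * T := mul_le_mul_of_nonneg_left p.2.2.2 (div_pos hε hT).le
        _ = ε := div_mul_cancel₀ ε hT.ne'
    linarith
  · have hbdd := (isCompact_range hcont.continuous_restrict_prod_Icc).bddAbove
    exact ciSup_le fun x => le_ciSup hbdd (x, ⟨0, le_rfl, hT.le⟩)
end
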